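/- arXiv:2301.09352 — 2 statements merged into one kernel-verified Lean document; each statement's English description precedes it below -/
import Mathlib

section
/- Let x ∈ ℝ^N, let R > 0 and y ∈ ℝ^N with |x - y| = R, and let k < N. Then for every 1 ≤ k₁ ≤ k there exist orthonormal vectors ξ̄₁,…,ξ̄_{k₁} in ℝ^N such that ⟨ξ̄_j, (y - x)/|y - x|⟩ ≥ 1/√(k₁ N) for every j = 1,…,k₁, provided there exists a unit vector ξ with ⟨ξ, (y-x)/|y-x|⟩ ≥ 1/√N and the ξ̄_j are required to span the same k₁-dimensional space as a given orthonormal family containing ξ. -/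
/-! For `u ∈ V` the inner product `⟪u, v⟫` only sees the orthogonal projection `p` of `v` onto `V`,
and `‖p‖ ≥ ⟪ξ, v⟫ ≥ 1/√N`. The vector `w` whose coordinates in a fixed orthonormal basis of `V`
all equal `‖p‖/√k₁` has the same norm as `p`, so the reflection exchanging `p` and `w` carries that
basis to one whose vectors all have inner product `‖p‖/√k₁ ≥ 1/√(k₁ N)` with `v`. -/

open scoped RealInnerProductSpace

theorem EuclideanSpace.norm_toLp_const {ι : Type*} [Fintype ι] (a : ℝ) :
    ‖WithLp.toLp 2 (Function.const ι a)‖ = √(Fintype.card ι) * |a| := by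
  rw [EuclideanSpace.norm_eq]
  simp [Real.sqrt_mul, Real.sqrt_sq_eq_abs]

namespace OrthonormalBasis

variable {ι E : Type*} [Fintype ι] [NormedAddCommGroup E] [InnerProductSpace ℝ E]

theorem exists_norm_eq_inner_eq_const (b : OrthonormalBasis ι ℝ E) (c : E) :
    ∃ w : E, ‖w‖ = ‖c‖ ∧ ∀ i, ⟪b i, w⟫ = ‖c‖ / √(Fintype.card ι) := by
  refine ⟨b.repr.symm (WithLp.toLp 2 (Function.const ι (‖c‖ / √(Fintype.card ι)))), ?_, ?_⟩
  · rw [LinearIsometryEquiv.norm_map, EuclideanSpace.norm_toLp_const]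
    rcases isEmpty_or_nonempty ι with hι | hι
    · have : c = 0 := b.repr.injective (Subsingleton.elim _ (b.repr 0))
      simp [this]
    · have : 0 < √(Fintype.card ι) := by positivity
      rw [abs_of_nonneg (by positivity)]
      field_simp
  · intro i
    rw [← b.repr_apply_apply]
    simp

theorem exists_inner_eq_norm_div_sqrt_card (b₀ : OrthonormalBasis ι ℝ E) (c : E) :
    ∃ b : OrthonormalBasis ι ℝ E, ∀ i, ⟪b i, c⟫ = ‖c‖ / √(Fintype.card ι) := by
  obtain ⟨w, hw, hbw⟩ := b₀.exists_norm_eq_inner_eq_const c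
  let f := (ℝ ∙ (c - w))ᗮ.reflection
  have hfc : f c = w := Submodule.reflection_sub hw.symm
  refine ⟨b₀.map f.symm, fun i => ?_⟩
  rw [b₀.map_apply, f.symm.inner_map_eq_flip, f.symm_symm, hfc, hbw]

end OrthonormalBasis

theorem stmt_8_general {N k₁ : ℕ}
    (v : EuclideanSpace ℝ (Fin N))
    (V : Submodule ℝ (EuclideanSpace ℝ (Fin N))) (hV : Module.finrank ℝ V = k₁)
    (ξ : EuclideanSpace ℝ (Fin N)) (hξV : ξ ∈ V) (hξ : ‖ξ‖ = 1)
    (hξv : 1 / Real.sqrt N ≤ (inner ℝ ξ v : ℝ)) :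
    ∃ ξbar : Fin k₁ → EuclideanSpace ℝ (Fin N),
      Orthonormal ℝ ξbar ∧ (∀ j, ξbar j ∈ V) ∧
      Submodule.span ℝ (Set.range ξbar) = V ∧
      ∀ j, 1 / Real.sqrt (k₁ * N) ≤ (inner ℝ (ξbar j) v : ℝ) := by
  let p : V := V.orthogonalProjectionOnto v
  have inner_p (u : V) : ⟪(u : EuclideanSpace ℝ (Fin N)), v⟫ = ⟪u, p⟫ :=
    (V.inner_orthogonalProjectionOnto_eq_of_mem_left u v).symm
  have norm_p : 1 / √N ≤ ‖p‖ :=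
    calc 1 / √N ≤ ⟪ξ, v⟫ := hξv
      _ = ⟪(⟨ξ, hξV⟩ : V), p⟫ := inner_p ⟨ξ, hξV⟩
      _ ≤ ‖p‖ := by simpa [hξ] using real_inner_le_norm (⟨ξ, hξV⟩ : V) p
  obtain ⟨b, hb⟩ :=
    ((stdOrthonormalBasis ℝ V).reindex (finCongr hV)).exists_inner_eq_norm_div_sqrt_card p
  refine ⟨fun j => b j, b.orthonormal.comp_linearIsometry V.subtypeₗᵢ, fun j => (b j).2, ?_,
    fun j => ?_⟩
  · rw [Set.range_comp', ← V.coe_subtype, Submodule.span_image, ← b.coe_toBasis, b.toBasis.span_eq,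
      Submodule.map_subtype_top]
  · rw [inner_p, hb, Fintype.card_fin]
    calc 1 / √(k₁ * N) = (1 / √N) / √k₁ := by rw [Real.sqrt_mul (Nat.cast_nonneg k₁)]; ring
      _ ≤ ‖p‖ / √k₁ := by gcongr

theorem stmt_8 {N k k₁ : ℕ} (hkN : k < N) (hk₁ : 1 ≤ k₁) (hk₁k : k₁ ≤ k)
    (x y : EuclideanSpace ℝ (Fin N)) (R : ℝ) (hR : 0 < R) (hxy : ‖x - y‖ = R)
    (v : EuclideanSpace ℝ (Fin N)) (hv : v = ‖y - x‖⁻¹ • (y - x))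
    (V : Submodule ℝ (EuclideanSpace ℝ (Fin N))) (hV : Module.finrank ℝ V = k₁)
    (ξ : EuclideanSpace ℝ (Fin N)) (hξV : ξ ∈ V) (hξ : ‖ξ‖ = 1)
    (hξv : 1 / Real.sqrt N ≤ (inner ℝ ξ v : ℝ)) :
    ∃ ξbar : Fin k₁ → EuclideanSpace ℝ (Fin N),
      Orthonormal ℝ ξbar ∧ (∀ j, ξbar j ∈ V) ∧
      Submodule.span ℝ (Set.range ξbar) = V ∧
      ∀ j, 1 / Real.sqrt (k₁ * N) ≤ (inner ℝ (ξbar j) v : ℝ) :=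
  stmt_8_general v V hV ξ hξV hξ hξv
end

section
/- Let x ∈ ℝ^N with |x| ≤ 1, let k₁ ≤ N, let ξ₁,…,ξ_{k₁} be orthonormal with ⟨x/|x|, ξ_j⟩ ≥ 1/√(k₁N) for all j (x ≠ 0), and let τ ∈ ℝ^{k₁} with t₁ < τ_j < t₂ < 0 for all j, where √(k₁) t_{1,2} = −|x|/√N ∓ √(1 − 1/(2N) − |x|²(1 − 1/N)). Then |x + Σ_j τ_j ξ_j|² ≤ 1 − 1/(2N). -/
/-!
Expand the square: for orthonormal `ξ`,
`‖x + ∑ τⱼ ξⱼ‖² = ‖x‖² + ∑ (τⱼ² + 2 τⱼ ⟪x, ξⱼ⟫)`, and since every `τⱼ` is negative the lower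
bound `⟪x, ξⱼ⟫ ≥ c := ‖x‖ / √(k₁ N)` turns each summand into at most `τⱼ² + 2 c τⱼ`.
The numbers `t₁, t₂` are exactly the roots of `k₁ (t² + 2 c t) = 1 - 1/(2N) - ‖x‖²`, so for
`τⱼ` strictly between them each summand is below `(1 - 1/(2N) - ‖x‖²) / k₁`; summing the
`k₁` summands gives the bound.
-/

open Finset RealInnerProductSpace

section Orthonormal

variable {ι E : Type*} [Fintype ι] [NormedAddCommGroup E] [InnerProductSpace ℝ E]

theorem Orthonormal.norm_add_sum_smul_sq {ξ : ι → E} (hξ : Orthonormal ℝ ξ) (x : E) (τ : ι → ℝ) :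
    ‖x + ∑ i, τ i • ξ i‖ ^ 2 = ‖x‖ ^ 2 + ∑ i, (τ i ^ 2 + 2 * τ i * ⟪x, ξ i⟫) := by
  have hcross : ⟪x, ∑ i, τ i • ξ i⟫ = ∑ i, τ i * ⟪x, ξ i⟫ := by
    simp only [inner_sum, real_inner_smul_right]
  have hsq : ‖∑ i, τ i • ξ i‖ ^ 2 = ∑ i, τ i ^ 2 := by
    rw [← real_inner_self_eq_norm_sq, hξ.inner_sum]
    simp [sq]
  rw [norm_add_sq_real, hcross, hsq, sum_add_distrib, mul_sum]
  simp only [mul_assoc, add_comm, add_left_comm]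

theorem Orthonormal.norm_add_sum_smul_sq_le {ξ : ι → E} (hξ : Orthonormal ℝ ξ) {x : E} {c : ℝ}
    (hc : ∀ i, c ≤ ⟪x, ξ i⟫) {τ : ι → ℝ} (hτ : ∀ i, τ i ≤ 0) :
    ‖x + ∑ i, τ i • ξ i‖ ^ 2 ≤ ‖x‖ ^ 2 + ∑ i, (τ i ^ 2 + 2 * c * τ i) := by
  rw [hξ.norm_add_sum_smul_sq]
  gcongr ‖x‖ ^ 2 + ∑ i, ?_ with i
  nlinarith [hc i, hτ i]

end Orthonormal

theorem norm_mul_le_inner_of_le_inner_normalize {E : Type*} [NormedAddCommGroup E]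
    [InnerProductSpace ℝ E] {x y : E} {c : ℝ} (h : c ≤ ⟪‖x‖⁻¹ • x, y⟫) : ‖x‖ * c ≤ ⟪x, y⟫ := by
  rcases eq_or_ne x 0 with rfl | hx
  · simp
  · calc ‖x‖ * c ≤ ‖x‖ * ⟪‖x‖⁻¹ • x, y⟫ := by gcongr
      _ = ⟪x, y⟫ := by
        rw [real_inner_smul_left, mul_inv_cancel_left₀ (norm_ne_zero_iff.mpr hx)]

theorem sq_add_two_mul_lt_of_mem_Ioo_roots {k N r τ : ℝ} (hk : 0 < k) (hN : 0 ≤ N)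
    (h₁ : -r / √N - √(1 - 1 / (2 * N) - r ^ 2 * (1 - 1 / N)) < √k * τ)
    (h₂ : √k * τ < -r / √N + √(1 - 1 / (2 * N) - r ^ 2 * (1 - 1 / N))) :
    τ ^ 2 + 2 * (r / √(k * N)) * τ < (1 - 1 / (2 * N) - r ^ 2) / k := by
  rw [lt_div_iff₀' hk]
  have hsq : (√k * τ + r / √N) ^ 2 < 1 - 1 / (2 * N) - r ^ 2 * (1 - 1 / N) :=
    Real.sq_lt.mpr ⟨by linarith [neg_div √N r], by linarith [neg_div √N r]⟩
  have hcross : k * (r / √(k * N)) = √k * (r / √N) := by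
    rw [Real.sqrt_mul hk.le, div_mul_eq_div_div_swap, mul_div_assoc', mul_div_right_comm,
      Real.div_sqrt]
  have hsqr : (r / √N) ^ 2 = r ^ 2 / N := by rw [div_pow, Real.sq_sqrt hN]
  calc k * (τ ^ 2 + 2 * (r / √(k * N)) * τ)
      = (√k * τ + r / √N) ^ 2 - (r / √N) ^ 2 := by
        linear_combination (-τ ^ 2) * Real.sq_sqrt hk.le + 2 * τ * hcross
    _ < 1 - 1 / (2 * N) - r ^ 2 := by
        rw [hsqr]
        linarith [show r ^ 2 * (1 - 1 / N) = r ^ 2 - r ^ 2 / N by ring]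

theorem stmt_16_general {N k₁ : ℕ} (hk₁ : 1 ≤ k₁)
    (x : EuclideanSpace ℝ (Fin N))
    (t₁ t₂ : ℝ)
    (ht₁ : Real.sqrt k₁ * t₁ = -‖x‖/Real.sqrt N - Real.sqrt (1 - 1/(2*N) - ‖x‖^2 * (1 - 1/N)))
    (ht₂ : Real.sqrt k₁ * t₂ = -‖x‖/Real.sqrt N + Real.sqrt (1 - 1/(2*N) - ‖x‖^2 * (1 - 1/N)))
    (ht₂0 : t₂ < 0)
    (ξ : Fin k₁ → EuclideanSpace ℝ (Fin N)) (hξ : Orthonormal ℝ ξ)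
    (hξx : ∀ j, 1 / Real.sqrt (k₁ * N) ≤ (inner ℝ (‖x‖⁻¹ • x) (ξ j) : ℝ))
    (τ : Fin k₁ → ℝ) (hτ : ∀ j, t₁ < τ j ∧ τ j < t₂) :
    ‖x + ∑ j, τ j • ξ j‖^2 ≤ 1 - 1/(2*N) := by
  have hk : (0 : ℝ) < k₁ := Nat.cast_pos.mpr hk₁
  have hsk : 0 < √(k₁ : ℝ) := Real.sqrt_pos.mpr hk
  set c := ‖x‖ / √(k₁ * N)
  have hinner : ∀ j, c ≤ ⟪x, ξ j⟫ := fun j => by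
    simpa only [mul_one_div] using norm_mul_le_inner_of_le_inner_normalize (hξx j)
  have hterm : ∀ j ∈ univ, τ j ^ 2 + 2 * c * τ j < (1 - 1 / (2 * N) - ‖x‖ ^ 2) / k₁ :=
    fun j _ => sq_add_two_mul_lt_of_mem_Ioo_roots hk (Nat.cast_nonneg N)
      (ht₁ ▸ mul_lt_mul_of_pos_left (hτ j).1 hsk) (ht₂ ▸ mul_lt_mul_of_pos_left (hτ j).2 hsk)
  have hsum : ∑ j, (τ j ^ 2 + 2 * c * τ j) ≤ 1 - 1 / (2 * N) - ‖x‖ ^ 2 := by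
    have := sum_le_card_nsmul univ _ _ fun j hj => (hterm j hj).le
    rwa [card_univ, Fintype.card_fin, nsmul_eq_mul, mul_div_cancel₀ _ hk.ne'] at this
  have hnorm := hξ.norm_add_sum_smul_sq_le hinner fun j => ((hτ j).2.trans ht₂0).le
  linarith

theorem stmt_16 {N k₁ : ℕ} (hk₁ : 1 ≤ k₁) (hk₁N : k₁ ≤ N)
    (x : EuclideanSpace ℝ (Fin N)) (hx : x ≠ 0) (hx1 : ‖x‖ ≤ 1)
    (hdisc : 0 ≤ 1 - 1/(2*N) - ‖x‖^2 * (1 - 1/N))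
    (t₁ t₂ : ℝ)
    (ht₁ : Real.sqrt k₁ * t₁ = -‖x‖/Real.sqrt N - Real.sqrt (1 - 1/(2*N) - ‖x‖^2 * (1 - 1/N)))
    (ht₂ : Real.sqrt k₁ * t₂ = -‖x‖/Real.sqrt N + Real.sqrt (1 - 1/(2*N) - ‖x‖^2 * (1 - 1/N)))
    (ht₂0 : t₂ < 0)
    (ξ : Fin k₁ → EuclideanSpace ℝ (Fin N)) (hξ : Orthonormal ℝ ξ)
    (hξx : ∀ j, 1 / Real.sqrt (k₁ * N) ≤ (inner ℝ (‖x‖⁻¹ • x) (ξ j) : ℝ))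
    (τ : Fin k₁ → ℝ) (hτ : ∀ j, t₁ < τ j ∧ τ j < t₂) :
    ‖x + ∑ j, τ j • ξ j‖^2 ≤ 1 - 1/(2*N) :=
  stmt_16_general hk₁ x t₁ t₂ ht₁ ht₂ ht₂0 ξ hξ hξx τ hτ
end
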